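/- Lᵖ convergence of matrix spherical means: Let n ≥ m ≥ 1, let 1 ≤ p < ∞, and let f ∈ Lᵖ(M_{n,m}). For a positive definite m×m matrix r define (M_r f)(x) := ∫_{O(n)} f(x + γ·v₀·r^{1/2}) dγ, where v₀ ∈ M_{n,m} is the matrix whose last m rows form I_m and whose first n−m rows are 0, and r^{1/2} is the positive semidefinite square root. Then M_r f → f in the Lᵖ norm as r → 0; precisely, for every ε > 0 there exists δ > 0 such that for every positive definite m×m matrix r with tr(r) < δ, one has ‖M_r f − f‖_{Lᵖ(M_{n,m})} ≤ ε. -/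

import Mathlib

open MeasureTheory Matrix
open scoped ENNReal

/-- Lebesgue measure on the space of real `p × q` matrices, identified with `ℝ^{pq}`. -/
noncomputable instance matMS (p q : ℕ) : MeasureSpace (Matrix (Fin p) (Fin q) ℝ) :=
  (inferInstance : MeasureSpace (Fin p → Fin q → ℝ))

/-- Block matrix whose first `k` rows are `ω` and last `n - k` rows are `t`. -/
def blockRows {n k m : ℕ} (ω : Matrix (Fin k) (Fin m) ℝ)
    (t : Matrix (Fin (n - k)) (Fin m) ℝ) : Matrix (Fin n) (Fin m) ℝ :=
  fun i j =>
    if h : (i : ℕ) < k then ω ⟨i, h⟩ j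
    else t ⟨(i : ℕ) - k, by have := i.isLt; omega⟩ j

/-- The matrix formed by the last `n - k` rows of `y`. -/
def lowerRows {n m : ℕ} (k : ℕ) (y : Matrix (Fin n) (Fin m) ℝ) :
    Matrix (Fin (n - k)) (Fin m) ℝ :=
  fun i j => y ⟨k + i, by have := i.isLt; omega⟩ j

/-- The Siegel gamma function `Γ_m(α) = π^{m(m-1)/4} ∏_{j=0}^{m-1} Γ(α - j/2)`. -/
noncomputable def SiegelGamma (m : ℕ) (α : ℝ) : ℝ :=
  Real.pi ^ ((m : ℝ) * ((m : ℝ) - 1) / 4) * ∏ j ∈ Finset.range m, Real.Gamma (α - (j : ℝ) / 2)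

/-- The `n × m` matrix whose last `m` rows form `I_m` and whose first `n - m` rows are `0`. -/
def v0 (n m : ℕ) : Matrix (Fin n) (Fin m) ℝ :=
  fun i j => if (i : ℕ) = n - m + (j : ℕ) then 1 else 0

open Classical in
/-- The positive semidefinite square root (junk value `0` off the psd cone). -/
noncomputable def psdSqrt {m : ℕ} (A : Matrix (Fin m) (Fin m) ℝ) :
    Matrix (Fin m) (Fin m) ℝ :=
  if h : A.PosSemidef then
    h.1.eigenvectorUnitary.1 * diagonal (fun i => Real.sqrt (h.1.eigenvalues i)) *
      (star h.1.eigenvectorUnitary : Matrix (Fin m) (Fin m) ℝ)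
  else 0

-- ===== auxiliary lemmas =====

lemma jensen_aux {α : Type*} [MeasurableSpace α] (μ : Measure α) [IsProbabilityMeasure μ]
    {p : ℝ} (hp : 1 ≤ p) {φ : α → ℝ≥0∞} (hφ : AEMeasurable φ μ) :
    (∫⁻ a, φ a ∂μ) ^ p ≤ ∫⁻ a, (φ a) ^ p ∂μ := by
  rcases eq_or_lt_of_le hp with rfl | hp1
  · simp
  have hpq : p.HolderConjugate (Real.conjExponent p) := Real.HolderConjugate.conjExponent hp1
  have h := ENNReal.lintegral_mul_le_Lp_mul_Lq μ hpq hφ aemeasurable_const (g := fun _ => 1)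
  simp only [Pi.mul_apply, mul_one, ENNReal.one_rpow, lintegral_one, measure_univ, one_mul] at h
  calc (∫⁻ a, φ a ∂μ) ^ p ≤ ((∫⁻ a, φ a ^ p ∂μ) ^ (1 / p)) ^ p :=
        ENNReal.rpow_le_rpow h (by positivity)
    _ = ∫⁻ a, φ a ^ p ∂μ := by
        rw [← ENNReal.rpow_mul, one_div, inv_mul_cancel₀ (by positivity), ENNReal.rpow_one]

lemma translation_cont (d e : ℕ) (p : ℝ) (hp : 1 ≤ p)
    (f : (Fin d → Fin e → ℝ) → ℝ) (hf : MemLp f (ENNReal.ofReal p) volume)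
    (ε : ℝ) (hε : 0 < ε) :
    ∃ δ > 0, ∀ h : Fin d → Fin e → ℝ, ‖h‖ < δ →
      eLpNorm (fun x => f (x + h) - f x) (ENNReal.ofReal p) volume ≤ ENNReal.ofReal ε := by
  have hp0 : ENNReal.ofReal p ≠ 0 := by simp [ENNReal.ofReal_eq_zero]; linarith
  have hptop : ENNReal.ofReal p ≠ ∞ := ENNReal.ofReal_ne_top
  have hptr : (ENNReal.ofReal p).toReal = p := ENNReal.toReal_ofReal (by linarith)
  have hp1 : (1 : ℝ≥0∞) ≤ ENNReal.ofReal p := by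
    rw [← ENNReal.ofReal_one]; exact ENNReal.ofReal_le_ofReal hp
  haveI : (volume : Measure (Fin d → Fin e → ℝ)).Regular :=
    Measure.Regular.of_sigmaCompactSpace_of_isLocallyFiniteMeasure _
  obtain ⟨g, hgsupp, hgclose, hgcont, hgmem⟩ :=
    hf.exists_hasCompactSupport_eLpNorm_sub_le hptop
      (ε := ENNReal.ofReal (ε/3)) (by simp [ENNReal.ofReal_eq_zero]; linarith)
  set K₁ : Set (Fin d → Fin e → ℝ) := Metric.cthickening 1 (tsupport g) with hK₁
  have hK₁c : IsCompact K₁ := hgsupp.cthickening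
  have hK₁m : MeasurableSet K₁ := Metric.isClosed_cthickening.measurableSet
  have hK₁fin : volume K₁ < ∞ := hK₁c.measure_lt_top
  set C : ℝ := (volume K₁ ^ (1/p)).toReal with hC
  have hCnn : 0 ≤ C := ENNReal.toReal_nonneg
  have hKrt : volume K₁ ^ (1/p) ≠ ∞ :=
    (ENNReal.rpow_lt_top_of_nonneg (by positivity) hK₁fin.ne).ne
  set η : ℝ := (ε/3) / (C + 1) with hη
  have hηpos : 0 < η := by positivity
  have hgu : UniformContinuous g := hgsupp.uniformContinuous_of_continuous hgcont
  obtain ⟨δ₂, hδ₂pos, hδ₂⟩ := Metric.uniformContinuous_iff.1 hgu η hηpos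
  refine ⟨min δ₂ 1, lt_min hδ₂pos one_pos, fun h hh => ?_⟩
  have hh2 : ‖h‖ < δ₂ := lt_of_lt_of_le hh (min_le_left _ _)
  have hh1 : ‖h‖ ≤ 1 := le_of_lt (lt_of_lt_of_le hh (min_le_right _ _))
  have hmid : eLpNorm (fun x => g (x + h) - g x) (ENNReal.ofReal p) volume
      ≤ ENNReal.ofReal (ε/3) := by
    have hptw : ∀ x, (‖g (x + h) - g x‖₊ : ℝ≥0∞) ^ p
        ≤ K₁.indicator (fun _ => ENNReal.ofReal η ^ p) x := by
      intro x
      by_cases hx : x ∈ K₁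
      · rw [Set.indicator_of_mem hx]
        refine ENNReal.rpow_le_rpow ?_ (by positivity)
        rw [← enorm_eq_nnnorm, ← ofReal_norm]
        refine ENNReal.ofReal_le_ofReal ?_
        have := hδ₂ (a := x + h) (b := x) (by
          simpa [dist_eq_norm, add_sub_cancel_left] using hh2)
        rw [Real.dist_eq] at this
        exact this.le
      · rw [Set.indicator_of_notMem hx]
        have hx1 : x ∉ tsupport g := fun hmem => hx (Metric.self_subset_cthickening _ hmem)
        have hx2 : x + h ∉ tsupport g := by
          intro hmem
          exact hx (Metric.mem_cthickening_of_dist_le x (x + h) 1 _ hmem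
            (by simpa [dist_eq_norm, add_sub_cancel_left] using hh1))
        rw [image_eq_zero_of_notMem_tsupport hx1, image_eq_zero_of_notMem_tsupport hx2]
        simp [ENNReal.zero_rpow_of_pos (by linarith : (0:ℝ) < p)]
    rw [eLpNorm_eq_lintegral_rpow_enorm_toReal hp0 hptop, hptr]
    calc (∫⁻ x, ((‖g (x + h) - g x‖₊ : ℝ≥0∞)) ^ p) ^ (1/p)
        ≤ (∫⁻ x, K₁.indicator (fun _ => ENNReal.ofReal η ^ p) x) ^ (1/p) := by
          refine ENNReal.rpow_le_rpow (lintegral_mono fun x => ?_) (by positivity)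
          exact hptw x
      _ = (ENNReal.ofReal η ^ p * volume K₁) ^ (1/p) := by
          rw [lintegral_indicator_const hK₁m]
      _ = ENNReal.ofReal η * volume K₁ ^ (1/p) := by
          rw [ENNReal.mul_rpow_of_nonneg _ _ (by positivity), ← ENNReal.rpow_mul,
            mul_one_div_cancel (by linarith : p ≠ 0), ENNReal.rpow_one]
      _ ≤ ENNReal.ofReal (ε/3) := by
          rw [← ENNReal.ofReal_toReal hKrt, ← hC, ← ENNReal.ofReal_mul hηpos.le]
          refine ENNReal.ofReal_le_ofReal ?_
          rw [hη, div_mul_eq_mul_div, div_le_iff₀ (by positivity)]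
          nlinarith
  have hmp : MeasurePreserving (fun x => x + h) (volume : Measure (Fin d → Fin e → ℝ)) volume :=
    measurePreserving_add_right volume h
  have hfg_aesm : AEStronglyMeasurable (f - g) (volume : Measure (Fin d → Fin e → ℝ)) :=
    hf.1.sub hgmem.1
  have h1 : eLpNorm (fun x => f (x + h) - g (x + h)) (ENNReal.ofReal p) volume
      = eLpNorm (f - g) (ENNReal.ofReal p) volume := by
    have := eLpNorm_comp_measurePreserving (p := ENNReal.ofReal p) hfg_aesm hmp
    simpa [Function.comp_def] using this
  have hA : AEStronglyMeasurable (fun x => f (x + h) - g (x + h))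
      (volume : Measure (Fin d → Fin e → ℝ)) := by
    have := hfg_aesm.comp_measurePreserving hmp
    simpa [Function.comp_def] using this
  have hB : AEStronglyMeasurable (fun x => g (x + h) - g x)
      (volume : Measure (Fin d → Fin e → ℝ)) :=
    ((hgcont.comp (continuous_id.add continuous_const)).sub hgcont).aestronglyMeasurable
  have hC : AEStronglyMeasurable (g - f) (volume : Measure (Fin d → Fin e → ℝ)) :=
    hgmem.1.sub hf.1
  have hgf : eLpNorm (g - f) (ENNReal.ofReal p) volume
      = eLpNorm (f - g) (ENNReal.ofReal p) volume := by
    rw [show g - f = -(f - g) by ring, eLpNorm_neg]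
  have hkey : (fun x => f (x + h) - f x)
      = (fun x => f (x + h) - g (x + h)) + ((fun x => g (x + h) - g x) + (g - f)) := by
    funext x; simp only [Pi.add_apply, Pi.sub_apply]; ring
  calc eLpNorm (fun x => f (x + h) - f x) (ENNReal.ofReal p) volume
      = eLpNorm ((fun x => f (x + h) - g (x + h))
          + ((fun x => g (x + h) - g x) + (g - f))) (ENNReal.ofReal p) volume := by rw [← hkey]
    _ ≤ eLpNorm (fun x => f (x + h) - g (x + h)) (ENNReal.ofReal p) volume
        + eLpNorm ((fun x => g (x + h) - g x) + (g - f)) (ENNReal.ofReal p) volume :=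
        eLpNorm_add_le hA (hB.add hC) hp1
    _ ≤ eLpNorm (fun x => f (x + h) - g (x + h)) (ENNReal.ofReal p) volume
        + (eLpNorm (fun x => g (x + h) - g x) (ENNReal.ofReal p) volume
          + eLpNorm (g - f) (ENNReal.ofReal p) volume) :=
        add_le_add le_rfl (eLpNorm_add_le hB hC hp1)
    _ ≤ ENNReal.ofReal (ε/3) + (ENNReal.ofReal (ε/3) + ENNReal.ofReal (ε/3)) := by
        rw [h1, hgf]
        exact add_le_add hgclose (add_le_add hmid hgclose)
    _ = ENNReal.ofReal ε := by
        rw [← ENNReal.ofReal_add (by positivity) (by positivity),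
          ← ENNReal.ofReal_add (by positivity) (by positivity)]
        congr 1
        ring

lemma main_aux (d e : ℕ) (p : ℝ) (hp : 1 ≤ p)
    (f : (Fin d → Fin e → ℝ) → ℝ) (hf : MemLp f (ENNReal.ofReal p) volume)
    {α : Type*} [MeasurableSpace α] (μ : Measure α) [IsProbabilityMeasure μ]
    (v : α → (Fin d → Fin e → ℝ)) (hv : Measurable v)
    (ε : ℝ)
    (hδf : ∀ a : α, eLpNorm (fun x => f (x + v a) - f x) (ENNReal.ofReal p) volume
      ≤ ENNReal.ofReal ε) :
    eLpNorm (fun x => (∫ a, f (x + v a) ∂μ) - f x) (ENNReal.ofReal p) volume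
      ≤ ENNReal.ofReal ε := by
  have hppos : 0 < p := by linarith
  have hp0 : ENNReal.ofReal p ≠ 0 := by simp [ENNReal.ofReal_eq_zero]; linarith
  have hptop : ENNReal.ofReal p ≠ ∞ := ENNReal.ofReal_ne_top
  have hptr : (ENNReal.ofReal p).toReal = p := ENNReal.toReal_ofReal hppos.le
  set g : (Fin d → Fin e → ℝ) → ℝ := hf.1.mk f with hgdef
  have hg : StronglyMeasurable g := hf.1.stronglyMeasurable_mk
  have hfg : f =ᵐ[(volume : Measure (Fin d → Fin e → ℝ))] g := hf.1.ae_eq_mk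
  have hgm : Measurable g := hg.measurable
  have hgmem : MemLp g (ENNReal.ofReal p) volume :=
    ⟨hg.aestronglyMeasurable, by rw [← eLpNorm_congr_ae hfg]; exact hf.2⟩
  have hδg : ∀ a : α, eLpNorm (fun x => g (x + v a) - g x) (ENNReal.ofReal p) volume
      ≤ ENNReal.ofReal ε := by
    intro a
    have hmp : MeasurePreserving (fun x => x + v a)
        (volume : Measure (Fin d → Fin e → ℝ)) volume := measurePreserving_add_right volume _
    have h1 : (fun x => g (x + v a)) =ᵐ[(volume : Measure (Fin d → Fin e → ℝ))]
        (fun x => f (x + v a)) :=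
      hmp.quasiMeasurePreserving.ae_eq_comp hfg.symm
    have h2 : (fun x => g (x + v a) - g x) =ᵐ[volume] fun x => f (x + v a) - f x :=
      h1.sub hfg.symm
    rw [eLpNorm_congr_ae h2]
    exact hδf a
  obtain ⟨N, hNsub, hNm, hN0⟩ :=
    exists_measurable_superset_of_null (ae_iff.1 hfg : volume {x | f x ≠ g x} = 0)
  set T : Set ((Fin d → Fin e → ℝ) × α) := {q | q.1 + v q.2 ∈ N} with hTdef
  have hTm : MeasurableSet T := (measurable_fst.add (hv.comp measurable_snd)) hNm
  set S : Set (α × (Fin d → Fin e → ℝ)) := {q | q.2 + v q.1 ∈ N} with hSdef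
  have hSm : MeasurableSet S := (measurable_snd.add (hv.comp measurable_fst)) hNm
  have hS0 : (μ.prod volume) S = 0 := by
    rw [Measure.measure_prod_null hSm]
    refine Filter.Eventually.of_forall fun a => ?_
    have hmp : MeasurePreserving (fun x => x + v a)
        (volume : Measure (Fin d → Fin e → ℝ)) volume := measurePreserving_add_right volume _
    have heq : Prod.mk a ⁻¹' S = (fun x => x + v a) ⁻¹' N := rfl
    show volume (Prod.mk a ⁻¹' S) = (0 : α → ℝ≥0∞) a
    rw [heq, hmp.measure_preimage hNm.nullMeasurableSet, hN0, Pi.zero_apply]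
  have hT0 : ((volume : Measure (Fin d → Fin e → ℝ)).prod μ) T = 0 := by
    have hswapeq : Prod.swap ⁻¹' T = S := rfl
    rw [← Measure.prod_swap, Measure.map_apply measurable_swap hTm, hswapeq, hS0]
  have haeN : ∀ᵐ x ∂(volume : Measure (Fin d → Fin e → ℝ)), μ (Prod.mk x ⁻¹' T) = 0 :=
    Measure.measure_ae_null_of_prod_null hT0
  have hcongr : (fun x => (∫ a, f (x + v a) ∂μ) - f x)
      =ᵐ[(volume : Measure (Fin d → Fin e → ℝ))]
      (fun x => (∫ a, g (x + v a) ∂μ) - g x) := by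
    filter_upwards [haeN, hfg] with x hx hfx
    have hae : (fun a => f (x + v a)) =ᵐ[μ] (fun a => g (x + v a)) := by
      rw [Filter.EventuallyEq, ae_iff]
      refine measure_mono_null (fun a ha => ?_) hx
      exact hNsub ha
    rw [integral_congr_ae hae, hfx]
  rw [eLpNorm_congr_ae hcongr]
  have hadd : Measurable fun q : (Fin d → Fin e → ℝ) × α => q.1 + v q.2 :=
    measurable_fst.add (hv.comp measurable_snd)
  have hprodmeas : Measurable fun q : (Fin d → Fin e → ℝ) × α => g (q.1 + v q.2) :=
    hgm.comp hadd
  set C : ℝ≥0∞ := ∫⁻ x, (‖g x‖₊ : ℝ≥0∞) ^ p ∂(volume : Measure (Fin d → Fin e → ℝ)) with hCdef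
  have hCtop : C ≠ ∞ := by
    have h2 := hgmem.2
    rw [eLpNorm_eq_lintegral_rpow_enorm_toReal hp0 hptop, hptr] at h2
    exact ((ENNReal.rpow_lt_top_iff_of_pos (by positivity : (0:ℝ) < 1/p)).1 h2).ne
  have hswap2 : ∫⁻ x, (∫⁻ a, (‖g (x + v a)‖₊ : ℝ≥0∞) ^ p ∂μ)
      ∂(volume : Measure (Fin d → Fin e → ℝ)) = C := by
    rw [lintegral_lintegral_swap (hprodmeas.enorm.pow_const p).aemeasurable]
    have : ∀ a : α, ∫⁻ x, (‖g (x + v a)‖₊ : ℝ≥0∞) ^ p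
        ∂(volume : Measure (Fin d → Fin e → ℝ)) = C := by
      intro a
      exact (measurePreserving_add_right volume (v a)).lintegral_comp
        (hgm.enorm.pow_const p)
    simp only [this, lintegral_const, measure_univ, mul_one]
  have hΦmeas : Measurable fun x => ∫⁻ a, (‖g (x + v a)‖₊ : ℝ≥0∞) ^ p ∂μ :=
    Measurable.lintegral_prod_right (hprodmeas.enorm.pow_const p)
  have hΦfin : ∀ᵐ x ∂(volume : Measure (Fin d → Fin e → ℝ)),
      (∫⁻ a, (‖g (x + v a)‖₊ : ℝ≥0∞) ^ p ∂μ) < ∞ :=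
    ae_lt_top hΦmeas (by rw [hswap2]; exact hCtop)
  have hInt : ∀ᵐ x ∂(volume : Measure (Fin d → Fin e → ℝ)),
      Integrable (fun a => g (x + v a)) μ := by
    filter_upwards [hΦfin] with x hx
    refine ⟨(hgm.comp (measurable_const.add hv)).aestronglyMeasurable, ?_⟩
    have hjen := jensen_aux μ hp
      (φ := fun a => (‖g (x + v a)‖₊ : ℝ≥0∞))
      ((hgm.comp (measurable_const.add hv)).enorm.aemeasurable)
    have hfin : (∫⁻ a, (‖g (x + v a)‖₊ : ℝ≥0∞) ∂μ) ^ p < ∞ := hjen.trans_lt hx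
    have := (ENNReal.rpow_lt_top_iff_of_pos hppos).1 hfin
    exact this
  have hle : ∀ᵐ x ∂(volume : Measure (Fin d → Fin e → ℝ)),
      (‖(∫ a, g (x + v a) ∂μ) - g x‖₊ : ℝ≥0∞) ^ p
        ≤ ∫⁻ a, (‖g (x + v a) - g x‖₊ : ℝ≥0∞) ^ p ∂μ := by
    filter_upwards [hInt] with x hx
    have heq : (∫ a, g (x + v a) ∂μ) - g x = ∫ a, (g (x + v a) - g x) ∂μ := by
      rw [integral_sub hx (integrable_const _), integral_const, probReal_univ,
        one_smul]
    rw [heq]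
    have hmeas2 : Measurable fun a => (‖g (x + v a) - g x‖₊ : ℝ≥0∞) :=
      ((hgm.comp (measurable_const.add hv)).sub measurable_const).enorm
    calc (‖∫ a, (g (x + v a) - g x) ∂μ‖₊ : ℝ≥0∞) ^ p
        ≤ (∫⁻ a, (‖g (x + v a) - g x‖₊ : ℝ≥0∞) ∂μ) ^ p :=
          ENNReal.rpow_le_rpow (enorm_integral_le_lintegral_enorm _) hppos.le
      _ ≤ ∫⁻ a, (‖g (x + v a) - g x‖₊ : ℝ≥0∞) ^ p ∂μ := jensen_aux μ hp hmeas2.aemeasurable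
  rw [eLpNorm_eq_lintegral_rpow_enorm_toReal hp0 hptop, hptr]
  have hsub : Measurable fun q : (Fin d → Fin e → ℝ) × α => g (q.1 + v q.2) - g q.1 :=
    hprodmeas.sub (hgm.comp measurable_fst)
  calc (∫⁻ x, (‖(∫ a, g (x + v a) ∂μ) - g x‖₊ : ℝ≥0∞) ^ p
        ∂(volume : Measure (Fin d → Fin e → ℝ))) ^ (1/p)
      ≤ (∫⁻ x, ∫⁻ a, (‖g (x + v a) - g x‖₊ : ℝ≥0∞) ^ p ∂μ
          ∂(volume : Measure (Fin d → Fin e → ℝ))) ^ (1/p) :=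
        ENNReal.rpow_le_rpow (lintegral_mono_ae hle) (by positivity)
    _ = (∫⁻ a, ∫⁻ x, (‖g (x + v a) - g x‖₊ : ℝ≥0∞) ^ p
          ∂(volume : Measure (Fin d → Fin e → ℝ)) ∂μ) ^ (1/p) := by
        rw [lintegral_lintegral_swap (hsub.enorm.pow_const p).aemeasurable]
    _ ≤ ((ENNReal.ofReal ε) ^ p) ^ (1/p) := by
        refine ENNReal.rpow_le_rpow ?_ (by positivity)
        have hbound : ∀ a : α, ∫⁻ x, (‖g (x + v a) - g x‖₊ : ℝ≥0∞) ^ p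
            ∂(volume : Measure (Fin d → Fin e → ℝ)) ≤ (ENNReal.ofReal ε) ^ p := by
          intro a
          have h2 := hδg a
          rw [eLpNorm_eq_lintegral_rpow_enorm_toReal hp0 hptop, hptr] at h2
          calc ∫⁻ x, (‖g (x + v a) - g x‖₊ : ℝ≥0∞) ^ p
              ∂(volume : Measure (Fin d → Fin e → ℝ))
              = ((∫⁻ x, (‖g (x + v a) - g x‖₊ : ℝ≥0∞) ^ p
                ∂(volume : Measure (Fin d → Fin e → ℝ))) ^ (1/p)) ^ p := by
                rw [← ENNReal.rpow_mul, one_div, inv_mul_cancel₀ (by positivity),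
                  ENNReal.rpow_one]
            _ ≤ (ENNReal.ofReal ε) ^ p := ENNReal.rpow_le_rpow h2 hppos.le
        calc ∫⁻ a, ∫⁻ x, (‖g (x + v a) - g x‖₊ : ℝ≥0∞) ^ p
            ∂(volume : Measure (Fin d → Fin e → ℝ)) ∂μ
            ≤ ∫⁻ _, (ENNReal.ofReal ε) ^ p ∂μ := lintegral_mono hbound
          _ = (ENNReal.ofReal ε) ^ p := by simp [lintegral_const, measure_univ]
    _ = ENNReal.ofReal ε := by
        rw [← ENNReal.rpow_mul, mul_one_div_cancel (by positivity : p ≠ 0), ENNReal.rpow_one]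

lemma meas_mul_right {a b c : ℕ} (B : Matrix (Fin b) (Fin c) ℝ) :
    Measurable (fun M : Matrix (Fin a) (Fin b) ℝ => M * B) := by
  have hrw : (fun M : Matrix (Fin a) (Fin b) ℝ => M * B)
      = fun (M : Fin a → Fin b → ℝ) (i : Fin a) (j : Fin c) => ∑ k, M i k * B k j := by
    funext M i j; rw [Matrix.mul_apply]
  rw [hrw]
  refine measurable_pi_lambda _ fun i => measurable_pi_lambda _ fun j => ?_
  refine Finset.measurable_sum _ fun k _ => ?_
  exact ((measurable_pi_apply k).comp (measurable_pi_apply i)).mul_const _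

lemma mul_entry_bound {a b c : ℕ} {P : Matrix (Fin a) (Fin b) ℝ} {Q : Matrix (Fin b) (Fin c) ℝ}
    {cp cq : ℝ} (hcp : 0 ≤ cp) (hP : ∀ i k, |P i k| ≤ cp) (hQ : ∀ k j, |Q k j| ≤ cq)
    (i : Fin a) (j : Fin c) : |(P * Q) i j| ≤ b * (cp * cq) := by
  rw [Matrix.mul_apply]
  calc |∑ k, P i k * Q k j| ≤ ∑ k, |P i k * Q k j| := Finset.abs_sum_le_sum_abs _ _
    _ ≤ ∑ _k : Fin b, cp * cq := Finset.sum_le_sum fun k _ => by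
        rw [abs_mul]; exact mul_le_mul (hP i k) (hQ k j) (abs_nonneg _) hcp
    _ = b * (cp * cq) := by
        simp [Finset.sum_const, Finset.card_univ, nsmul_eq_mul]


/-- `Lᵖ` convergence of the matrix spherical means `M_r f → f` as `r → 0` in the cone of
positive definite matrices. `μ` is the Haar probability measure on `O(n)`. -/
theorem spherical_means_Lp_convergence (n m : ℕ) (hm : 1 ≤ m) (hmn : m ≤ n)
    (p : ℝ) (hp : 1 ≤ p)
    (f : Matrix (Fin n) (Fin m) ℝ → ℝ) (hf : MemLp f (ENNReal.ofReal p) volume)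
    (μ : Measure (Matrix.orthogonalGroup (Fin n) ℝ)) [IsProbabilityMeasure μ]
    [μ.IsMulLeftInvariant]
    (ε : ℝ) (hε : 0 < ε) :
    ∃ δ > 0, ∀ r : Matrix (Fin m) (Fin m) ℝ, r.PosDef → Matrix.trace r < δ →
      eLpNorm (fun x => (∫ γ, f (x + γ.1 * v0 n m * psdSqrt r) ∂μ) - f x)
          (ENNReal.ofReal p) volume
        ≤ ENNReal.ofReal ε := by
  obtain ⟨δ₁, hδ₁pos, hδ₁⟩ := translation_cont n m p hp f hf ε hε
  set c : ℝ := (n : ℝ) * m + 1 with hc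
  have hcpos : 0 < c := by positivity
  have hn1 : (1 : ℝ) ≤ (n : ℝ) := by exact_mod_cast le_trans hm hmn
  have hm1 : (1 : ℝ) ≤ (m : ℝ) := by exact_mod_cast hm
  refine ⟨(δ₁ / c) ^ 2, by positivity, fun r hr htr => ?_⟩
  set A : Matrix (Fin m) (Fin m) ℝ := psdSqrt r with hAdef
  have hps : r.PosSemidef := hr.posSemidef
  have hAeq : A = hps.1.eigenvectorUnitary.1 * diagonal (fun i => Real.sqrt (hps.1.eigenvalues i)) *
      (star hps.1.eigenvectorUnitary : Matrix (Fin m) (Fin m) ℝ) := by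
    rw [hAdef, psdSqrt, dif_pos hps]
  have hAps : A.PosSemidef := by
    rw [hAeq]
    exact (posSemidef_diagonal_iff.2 fun i => Real.sqrt_nonneg _).mul_mul_conjTranspose_same _
  have hAA : A * A = r := by
    have hU : (star hps.1.eigenvectorUnitary : Matrix (Fin m) (Fin m) ℝ) *
        hps.1.eigenvectorUnitary.1 = 1 := Unitary.coe_star_mul_self _
    have hD : diagonal (fun i => Real.sqrt (hps.1.eigenvalues i)) *
        diagonal (fun i => Real.sqrt (hps.1.eigenvalues i))
        = diagonal (RCLike.ofReal ∘ hps.1.eigenvalues) := by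
      rw [diagonal_mul_diagonal]; congr 1; funext i
      simp [Real.mul_self_sqrt (hps.eigenvalues_nonneg i)]
    conv_rhs => rw [hps.1.spectral_theorem, Unitary.conjStarAlgAut_apply]
    rw [hAeq]
    calc _ = hps.1.eigenvectorUnitary.1 * (diagonal (fun i => Real.sqrt (hps.1.eigenvalues i)) *
          ((star hps.1.eigenvectorUnitary : Matrix (Fin m) (Fin m) ℝ) *
            hps.1.eigenvectorUnitary.1) * diagonal (fun i => Real.sqrt (hps.1.eigenvalues i))) *
          (star hps.1.eigenvectorUnitary : Matrix (Fin m) (Fin m) ℝ) := by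
          simp only [Matrix.mul_assoc]
      _ = _ := by rw [hU, Matrix.mul_one, hD]
  have hAsymm : ∀ i j, A i j = A j i := by
    intro i j
    have h := hAps.1
    conv_rhs => rw [← h]
    simp [Matrix.conjTranspose_apply]
  have hdiag : ∀ i, r i i = ∑ k, (A i k)^2 := by
    intro i
    rw [← hAA, Matrix.mul_apply]
    refine Finset.sum_congr rfl fun k _ => ?_
    rw [hAsymm k i]; ring
  have hdiag_nonneg : ∀ i, 0 ≤ r i i := fun i => by
    rw [hdiag]; positivity
  have htrace : Matrix.trace r = ∑ i, r i i := by simp [Matrix.trace, Matrix.diag]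
  have hdle : ∀ i, r i i ≤ Matrix.trace r := by
    intro i
    rw [htrace]
    exact Finset.single_le_sum (fun j _ => hdiag_nonneg j) (Finset.mem_univ i)
  have htr_nonneg : 0 ≤ Matrix.trace r := by
    rw [htrace]
    exact Finset.sum_nonneg fun i _ => hdiag_nonneg i
  have hAentry : ∀ k j, |A k j| ≤ Real.sqrt (Matrix.trace r) := by
    intro k j
    have h1 : (A j k)^2 ≤ r j j := by
      rw [hdiag j]
      exact Finset.single_le_sum (f := fun l => (A j l)^2) (fun l _ => sq_nonneg _)
        (Finset.mem_univ k)
    have h2 : (A k j)^2 ≤ Matrix.trace r := by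
      rw [hAsymm k j]; exact h1.trans (hdle j)
    calc |A k j| = Real.sqrt ((A k j)^2) := (Real.sqrt_sq_eq_abs _).symm
      _ ≤ Real.sqrt (Matrix.trace r) := Real.sqrt_le_sqrt h2
  have hv0e : ∀ (i : Fin n) (k : Fin m), |v0 n m i k| ≤ 1 := by
    intro i k
    simp only [v0]
    split <;> simp
  have hγe : ∀ γ : Matrix.orthogonalGroup (Fin n) ℝ, ∀ (i k : Fin n), |γ.1 i k| ≤ 1 := by
    intro γ i k
    have hmem : γ.1 * star γ.1 = 1 := (Matrix.mem_orthogonalGroup_iff (Fin n) ℝ).mp γ.2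
    have h1 : (γ.1 * star γ.1) i i = (1 : ℝ) := by rw [hmem]; simp [Matrix.one_apply]
    rw [Matrix.mul_apply] at h1
    have h2 : ∑ l, (γ.1 i l)^2 = 1 := by
      rw [← h1]
      refine Finset.sum_congr rfl fun l _ => ?_
      simp [Matrix.star_apply]
      ring
    have h3 : (γ.1 i k)^2 ≤ 1 := by
      rw [← h2]
      exact Finset.single_le_sum (f := fun l => (γ.1 i l)^2) (fun l _ => sq_nonneg _)
        (Finset.mem_univ k)
    nlinarith [abs_nonneg (γ.1 i k), sq_abs (γ.1 i k)]
  have hsq : Real.sqrt (Matrix.trace r) < δ₁ / c := by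
    have h := Real.sqrt_lt_sqrt htr_nonneg htr
    rwa [Real.sqrt_sq (by positivity)] at h
  set v : Matrix.orthogonalGroup (Fin n) ℝ → (Fin n → Fin m → ℝ) :=
    fun γ => γ.1 * v0 n m * psdSqrt r with hvdef
  have hvnorm : ∀ γ : Matrix.orthogonalGroup (Fin n) ℝ, ‖v γ‖ < δ₁ := by
    intro γ
    rw [pi_norm_lt_iff hδ₁pos]
    intro i
    rw [pi_norm_lt_iff hδ₁pos]
    intro j
    rw [Real.norm_eq_abs]
    have hB : ∀ (i : Fin n) (k : Fin m), |(γ.1 * v0 n m) i k| ≤ (n : ℝ) * (1 * 1) :=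
      fun i k => mul_entry_bound zero_le_one (hγe γ) hv0e i k
    have hy : |((γ.1 * v0 n m) * A) i j|
        ≤ (m : ℝ) * (((n : ℝ) * (1 * 1)) * Real.sqrt (Matrix.trace r)) :=
      mul_entry_bound (by positivity) hB hAentry i j
    have hsn : 0 ≤ Real.sqrt (Matrix.trace r) := Real.sqrt_nonneg _
    have hlt : (m : ℝ) * (((n : ℝ) * (1 * 1)) * Real.sqrt (Matrix.trace r)) < δ₁ := by
      have h1 : (m : ℝ) * ((n : ℝ) * (1 * 1)) * Real.sqrt (Matrix.trace r)
          < (m : ℝ) * ((n : ℝ) * (1 * 1)) * (δ₁ / c) :=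
        mul_lt_mul_of_pos_left hsq (by positivity)
      have h2 : (m : ℝ) * ((n : ℝ) * (1 * 1)) * (δ₁ / c) ≤ δ₁ := by
        rw [mul_one, mul_one]
        rw [mul_div_assoc', div_le_iff₀ hcpos]
        nlinarith
      calc (m : ℝ) * (((n : ℝ) * (1 * 1)) * Real.sqrt (Matrix.trace r))
          = (m : ℝ) * ((n : ℝ) * (1 * 1)) * Real.sqrt (Matrix.trace r) := by ring
        _ < (m : ℝ) * ((n : ℝ) * (1 * 1)) * (δ₁ / c) := h1
        _ ≤ δ₁ := h2
    exact lt_of_le_of_lt hy hlt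
  have hv : Measurable v := by
    have h1 : Measurable (fun M : Matrix (Fin n) (Fin n) ℝ => M * (v0 n m * psdSqrt r)) :=
      meas_mul_right _
    have h2 : v = (fun M : Matrix (Fin n) (Fin n) ℝ => M * (v0 n m * psdSqrt r))
        ∘ (fun γ : Matrix.orthogonalGroup (Fin n) ℝ => (γ.1 : Matrix (Fin n) (Fin n) ℝ)) := by
      funext γ
      show γ.1 * v0 n m * psdSqrt r = γ.1 * (v0 n m * psdSqrt r)
      rw [Matrix.mul_assoc]
    rw [h2]
    exact h1.comp measurable_subtype_coe
  exact main_aux n m p hp f hf μ v hv ε (fun a => hδ₁ _ (hvnorm a))
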